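/- arXiv:2502.09632 — 3 statements merged into one kernel-verified Lean document; each statement's English description precedes it below -/
import Mathlib

section
/- With P defined recursively from A by P 0 = 1 and P (k+1) = (P k)' + A * P k, and Q defined by Q 0 = 1 and Q (k+1) = (Q k)' + (Q k) * (-A), the k-th entrywise derivative of P l satisfies (P l)^{(k)} = Σ_{i=0}^{k} C(k,i) · (Q i) * (P (l+k-i)), for all k, l ≥ 0. -/
open Matrix Finset

noncomputable def mderiv {n : ℕ} (M : ℝ → Matrix (Fin n) (Fin n) ℝ) :
    ℝ → Matrix (Fin n) (Fin n) ℝ :=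
  fun s => Matrix.of fun i j => deriv (fun t => M t i j) s

noncomputable def vderiv {n : ℕ} (Y : ℝ → Fin n → ℝ) : ℝ → Fin n → ℝ :=
  fun s i => deriv (fun t => Y t i) s

def MSmooth {n : ℕ} (M : ℝ → Matrix (Fin n) (Fin n) ℝ) : Prop :=
  ∀ i j, ContDiff ℝ (⊤ : ℕ∞) (fun s => M s i j)

def VSmooth {n : ℕ} (Y : ℝ → Fin n → ℝ) : Prop :=
  ∀ i, ContDiff ℝ (⊤ : ℕ∞) (fun s => Y s i)

noncomputable def Psym {n : ℕ} (A : ℝ → Matrix (Fin n) (Fin n) ℝ) :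
    ℕ → ℝ → Matrix (Fin n) (Fin n) ℝ
  | 0 => fun _ => 1
  | k + 1 => fun s => mderiv (Psym A k) s + A s * Psym A k s

noncomputable def Qsym {n : ℕ} (A : ℝ → Matrix (Fin n) (Fin n) ℝ) :
    ℕ → ℝ → Matrix (Fin n) (Fin n) ℝ
  | 0 => fun _ => 1
  | k + 1 => fun s => mderiv (Qsym A k) s - Qsym A k s * A s

variable {n : ℕ}

lemma msmooth_entry {M : ℝ → Matrix (Fin n) (Fin n) ℝ} (hM : MSmooth M) (i j : Fin n) :
    Differentiable ℝ (fun s => M s i j) := (hM i j).differentiable (by simp)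

lemma msmooth_mderiv {M : ℝ → Matrix (Fin n) (Fin n) ℝ} (hM : MSmooth M) :
    MSmooth (mderiv M) := by
  intro i j
  have h := hM i j
  rw [show ((⊤ : ℕ∞) : WithTop ℕ∞) = ((⊤ : ℕ∞) : WithTop ℕ∞) + 1 from by
    rw [← WithTop.coe_one, ← WithTop.coe_add, top_add]] at h
  have := (contDiff_succ_iff_deriv.mp h).2.2
  simpa [mderiv] using this

lemma msmooth_matmul {M N : ℝ → Matrix (Fin n) (Fin n) ℝ} (hM : MSmooth M) (hN : MSmooth N) :
    MSmooth (fun s => M s * N s) := by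
  intro i j
  simp only [Matrix.mul_apply]
  exact ContDiff.sum fun x _ => (hM i x).mul (hN x j)

lemma msmooth_add {M N : ℝ → Matrix (Fin n) (Fin n) ℝ} (hM : MSmooth M) (hN : MSmooth N) :
    MSmooth (fun s => M s + N s) := fun i j => by
  simpa [Matrix.add_apply] using (hM i j).add (hN i j)

lemma msmooth_sub {M N : ℝ → Matrix (Fin n) (Fin n) ℝ} (hM : MSmooth M) (hN : MSmooth N) :
    MSmooth (fun s => M s - N s) := fun i j => by
  simpa [Matrix.sub_apply] using (hM i j).sub (hN i j)

lemma msmooth_one : MSmooth (fun _ : ℝ => (1 : Matrix (Fin n) (Fin n) ℝ)) :=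
  fun _ _ => contDiff_const

lemma mderiv_matmul {M N : ℝ → Matrix (Fin n) (Fin n) ℝ} (hM : MSmooth M) (hN : MSmooth N)
    (s : ℝ) :
    mderiv (fun t => M t * N t) s = mderiv M s * N s + M s * mderiv N s := by
  ext i j
  simp only [mderiv, of_apply, Matrix.add_apply, Matrix.mul_apply]
  rw [deriv_fun_sum (A := fun x t => M t i x * N t x j) (fun x _ => ((msmooth_entry hM i x s).mul (msmooth_entry hN x j s)))]
  rw [← Finset.sum_add_distrib]
  refine Finset.sum_congr rfl fun x _ => ?_
  exact deriv_mul (msmooth_entry hM i x s) (msmooth_entry hN x j s)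

lemma psym_smooth {A : ℝ → Matrix (Fin n) (Fin n) ℝ} (hA : MSmooth A) :
    ∀ l, MSmooth (Psym A l)
  | 0 => msmooth_one
  | l + 1 => msmooth_add (msmooth_mderiv (psym_smooth hA l))
      (msmooth_matmul hA (psym_smooth hA l))

lemma qsym_smooth {A : ℝ → Matrix (Fin n) (Fin n) ℝ} (hA : MSmooth A) :
    ∀ l, MSmooth (Qsym A l)
  | 0 => msmooth_one
  | l + 1 => msmooth_sub (msmooth_mderiv (qsym_smooth hA l))
      (msmooth_matmul (qsym_smooth hA l) hA)

lemma mderiv_psym {A : ℝ → Matrix (Fin n) (Fin n) ℝ} (l : ℕ) (s : ℝ) :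
    mderiv (Psym A l) s = Psym A (l + 1) s - A s * Psym A l s := by
  show mderiv (Psym A l) s = (mderiv (Psym A l) s + A s * Psym A l s) - A s * Psym A l s
  simp

lemma mderiv_qsym {A : ℝ → Matrix (Fin n) (Fin n) ℝ} (l : ℕ) (s : ℝ) :
    mderiv (Qsym A l) s = Qsym A (l + 1) s + Qsym A l s * A s := by
  show mderiv (Qsym A l) s = (mderiv (Qsym A l) s - Qsym A l s * A s) + Qsym A l s * A s
  simp

lemma mderiv_sum {r : Finset ℕ} {F : ℕ → ℝ → Matrix (Fin n) (Fin n) ℝ}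
    (h : ∀ i ∈ r, MSmooth (F i)) (s : ℝ) :
    mderiv (fun t => ∑ i ∈ r, F i t) s = ∑ i ∈ r, mderiv (F i) s := by
  ext a b
  simp only [mderiv, of_apply, Matrix.sum_apply]
  exact deriv_fun_sum (fun i hi => msmooth_entry (h i hi) a b s)

lemma mderiv_smul {c : ℝ} {F : ℝ → Matrix (Fin n) (Fin n) ℝ} (s : ℝ) :
    mderiv (fun t => c • F t) s = c • mderiv F s := by
  ext a b
  simp only [mderiv, of_apply, Matrix.smul_apply, smul_eq_mul]
  exact deriv_const_mul_field c

theorem stmt1 {n : ℕ} (A : ℝ → Matrix (Fin n) (Fin n) ℝ) (hA : MSmooth A) :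
    ∀ (k l : ℕ) (s : ℝ),
      mderiv^[k] (Psym A l) s =
        ∑ i ∈ Finset.range (k + 1),
          (k.choose i : ℝ) • (Qsym A i s * Psym A (l + k - i) s) := by
  intro k
  induction k with
  | zero =>
    intro l s
    simp [Qsym]
  | succ k ih =>
    intro l s
    rw [Function.iterate_succ_apply', funext (ih l)]
    have hsm : ∀ i ∈ range (k + 1), MSmooth
        (fun t => ((k.choose i : ℝ)) • (Qsym A i t * Psym A (l + k - i) t)) := by
      intro i _ a b
      have := (msmooth_matmul (qsym_smooth hA i) (psym_smooth hA (l + k - i))) a b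
      simpa using (contDiff_const.mul this)
    rw [mderiv_sum hsm s]
    have hterm : ∀ i ∈ range (k + 1),
        mderiv (fun t => ((k.choose i : ℝ)) • (Qsym A i t * Psym A (l + k - i) t)) s
          = (k.choose i : ℝ) • (Qsym A (i + 1) s * Psym A (l + k - i) s)
            + (k.choose i : ℝ) • (Qsym A i s * Psym A (l + k - i + 1) s) := by
      intro i hi
      rw [mderiv_smul, mderiv_matmul (qsym_smooth hA i) (psym_smooth hA _), mderiv_qsym,
        mderiv_psym, ← smul_add]
      congr 1
      noncomm_ring
    rw [Finset.sum_congr rfl hterm, Finset.sum_add_distrib]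
    have e2 : ∑ i ∈ range (k + 1), (k.choose i : ℝ) • (Qsym A i s * Psym A (l + k - i + 1) s)
        = ∑ i ∈ range (k + 1), ((k.choose (i + 1) : ℝ))
            • (Qsym A (i + 1) s * Psym A (l + k - i) s)
          + Qsym A 0 s * Psym A (l + k + 1) s := by
      rw [Finset.sum_range_succ']
      congr 1
      · rw [Finset.sum_range_succ, Nat.choose_succ_self]
        simp only [Nat.cast_zero, zero_smul, add_zero]
        refine Finset.sum_congr rfl fun i hi => ?_
        rw [Finset.mem_range] at hi
        have h1 : l + k - (i + 1) + 1 = l + k - i := by omega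
        rw [h1]
      · simp
    have e3 : ∑ i ∈ range (k + 1 + 1), ((k + 1).choose i : ℝ)
          • (Qsym A i s * Psym A (l + (k + 1) - i) s)
        = ∑ i ∈ range (k + 1), (((k + 1).choose (i + 1) : ℝ))
            • (Qsym A (i + 1) s * Psym A (l + k - i) s)
          + Qsym A 0 s * Psym A (l + k + 1) s := by
      rw [Finset.sum_range_succ']
      congr 1
      · refine Finset.sum_congr rfl fun i hi => ?_
        have h1 : l + (k + 1) - (i + 1) = l + k - i := by omega
        rw [h1]
      · simp [Nat.add_assoc]
    rw [e2, e3, ← add_assoc, ← Finset.sum_add_distrib]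
    congr 1
    refine Finset.sum_congr rfl fun i _ => ?_
    rw [Nat.choose_succ_succ, Nat.cast_add, add_smul]
end

section
/- With P and Q defined recursively from a smooth matrix-valued function A as above, for every k ≥ 1 one has Σ_{r=0}^{k} C(k,r) · (P (k-r)) * (Q r) = 0, while for k = 0 the sum equals the identity matrix. -/
open Matrix Finset

section aux
variable {n : ℕ}

lemma cd_deriv {f : ℝ → ℝ} (h : ContDiff ℝ (⊤ : ℕ∞) f) : ContDiff ℝ (⊤ : ℕ∞) (deriv f) := by
  exact (contDiff_infty_iff_deriv.mp h).2

lemma mderiv_const (C : Matrix (Fin n) (Fin n) ℝ) (s : ℝ) :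
    mderiv (fun _ => C) s = 0 := by
  ext i j; simp [mderiv]

lemma smooth_P (A : ℝ → Matrix (Fin n) (Fin n) ℝ) (hA : MSmooth A) :
    ∀ k, MSmooth (Psym A k)
  | 0 => fun i j => by
      simpa [Psym] using (contDiff_const : ContDiff ℝ (⊤ : ℕ∞) fun _ : ℝ => (1 : Matrix (Fin n) (Fin n) ℝ) i j)
  | k + 1 => by
      intro i j
      have ih := smooth_P A hA k
      have heq : (fun s => Psym A (k+1) s i j)
          = fun s => deriv (fun t => Psym A k t i j) s + ∑ x, A s i x * Psym A k s x j := by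
        funext s
        simp [Psym, mderiv, Matrix.mul_apply, Matrix.add_apply]
      rw [show (fun s => Psym A (k+1) s i j) = _ from heq]
      exact (cd_deriv (ih i j)).add
        (ContDiff.sum fun x _ => (hA i x).mul (ih x j))

lemma smooth_Q (A : ℝ → Matrix (Fin n) (Fin n) ℝ) (hA : MSmooth A) :
    ∀ k, MSmooth (Qsym A k)
  | 0 => fun i j => by
      simpa [Qsym] using (contDiff_const : ContDiff ℝ (⊤ : ℕ∞) fun _ : ℝ => (1 : Matrix (Fin n) (Fin n) ℝ) i j)
  | k + 1 => by
      intro i j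
      have ih := smooth_Q A hA k
      have heq : (fun s => Qsym A (k+1) s i j)
          = fun s => deriv (fun t => Qsym A k t i j) s - ∑ x, Qsym A k s i x * A s x j := by
        funext s
        simp [Qsym, mderiv, Matrix.mul_apply, Matrix.sub_apply]
      rw [show (fun s => Qsym A (k+1) s i j) = _ from heq]
      exact (cd_deriv (ih i j)).sub
        (ContDiff.sum fun x _ => (ih i x).mul (hA x j))

lemma entry_hasDerivAt {M : ℝ → Matrix (Fin n) (Fin n) ℝ} (hM : MSmooth M)
    (s : ℝ) (i j : Fin n) :
    HasDerivAt (fun t => M t i j) (mderiv M s i j) s :=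
  ((hM i j).differentiable (by simp) s).hasDerivAt

lemma mul_entry_hasDerivAt {M N : ℝ → Matrix (Fin n) (Fin n) ℝ}
    (hM : MSmooth M) (hN : MSmooth N) (s : ℝ) (i j : Fin n) :
    HasDerivAt (fun t => (M t * N t) i j)
      ((mderiv M s * N s + M s * mderiv N s) i j) s := by
  have key : HasDerivAt (fun t => ∑ x : Fin n, M t i x * N t x j)
      (∑ x : Fin n, (mderiv M s i x * N s x j + M s i x * mderiv N s x j)) s :=
    HasDerivAt.fun_sum fun x _ => (entry_hasDerivAt hM s i x).mul (entry_hasDerivAt hN s x j)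
  simpa [Matrix.mul_apply, Matrix.add_apply, Finset.sum_add_distrib] using key

lemma Ssum_zero (A : ℝ → Matrix (Fin n) (Fin n) ℝ) (hA : MSmooth A) :
    ∀ k, 1 ≤ k → ∀ s : ℝ,
      ∑ r ∈ Finset.range (k + 1), (k.choose r : ℝ) • (Psym A (k - r) s * Qsym A r s) = 0 := by
  intro k hk
  induction k, hk using Nat.le_induction with
  | base =>
    intro s
    have hP0 : Psym A 0 = fun _ : ℝ => (1 : Matrix (Fin n) (Fin n) ℝ) := rfl
    have hQ0 : Qsym A 0 = fun _ : ℝ => (1 : Matrix (Fin n) (Fin n) ℝ) := rfl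
    have hP1 : Psym A 1 s = A s := by
      show mderiv (Psym A 0) s + A s * Psym A 0 s = A s
      rw [hP0, mderiv_const]; simp
    have hQ1 : Qsym A 1 s = -(A s) := by
      show mderiv (Qsym A 0) s - Qsym A 0 s * A s = -(A s)
      rw [hQ0, mderiv_const]; simp
    rw [Finset.sum_range_succ, Finset.sum_range_one]
    norm_num [hP1, hQ1, hP0, hQ0]
  | succ k hk ih =>
    intro s
    have hPs := smooth_P A hA
    have hQs := smooth_Q A hA
    -- derivative of the identically-zero sum is zero
    have hE : ∑ r ∈ Finset.range (k + 1), (k.choose r : ℝ) •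
        (mderiv (Psym A (k - r)) s * Qsym A r s + Psym A (k - r) s * mderiv (Qsym A r) s)
        = 0 := by
      ext i j
      have h1 : HasDerivAt
          (fun t => ∑ r ∈ Finset.range (k + 1),
            (k.choose r : ℝ) * ((Psym A (k - r) t * Qsym A r t) i j))
          (∑ r ∈ Finset.range (k + 1), (k.choose r : ℝ) *
            ((mderiv (Psym A (k - r)) s * Qsym A r s
              + Psym A (k - r) s * mderiv (Qsym A r) s) i j)) s :=
        HasDerivAt.fun_sum fun r _ =>
          (mul_entry_hasDerivAt (hPs (k - r)) (hQs r) s i j).const_mul _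
      have hfun : (fun t => ∑ r ∈ Finset.range (k + 1),
          (k.choose r : ℝ) * ((Psym A (k - r) t * Qsym A r t) i j)) = fun _ : ℝ => (0 : ℝ) := by
        funext t
        have := congrFun (congrFun (ih t) i) j
        simpa [Matrix.sum_apply, Matrix.smul_apply, smul_eq_mul] using this
      have h0 : HasDerivAt
          (fun t => ∑ r ∈ Finset.range (k + 1),
            (k.choose r : ℝ) * ((Psym A (k - r) t * Qsym A r t) i j)) 0 s := by
        rw [hfun]; exact hasDerivAt_const s 0
      have huniq := h1.unique h0
      simpa [Matrix.sum_apply, Matrix.smul_apply, smul_eq_mul, mul_add] using huniq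
    -- Pascal splitting
    have hsplit : ∑ r ∈ Finset.range (k + 1 + 1),
          ((k + 1).choose r : ℝ) • (Psym A (k + 1 - r) s * Qsym A r s)
        = (∑ r ∈ Finset.range (k + 1),
            (k.choose r : ℝ) • (Psym A (k + 1 - r) s * Qsym A r s))
          + ∑ r ∈ Finset.range (k + 1),
            (k.choose r : ℝ) • (Psym A (k - r) s * Qsym A (r + 1) s) := by
      rw [Finset.sum_range_succ']
      have hterm : ∀ r, ((k + 1).choose (r + 1) : ℝ) •
            (Psym A (k + 1 - (r + 1)) s * Qsym A (r + 1) s)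
          = (k.choose r : ℝ) • (Psym A (k - r) s * Qsym A (r + 1) s)
            + (k.choose (r + 1) : ℝ) • (Psym A (k - r) s * Qsym A (r + 1) s) := by
        intro r
        rw [Nat.choose_succ_succ, Nat.succ_sub_succ]
        push_cast
        rw [add_smul]
      simp only [hterm]
      rw [Finset.sum_add_distrib]
      have h2 : (∑ r ∈ Finset.range (k + 1),
            (k.choose (r + 1) : ℝ) • (Psym A (k - r) s * Qsym A (r + 1) s))
          + ((k + 1).choose 0 : ℝ) • (Psym A (k + 1 - 0) s * Qsym A 0 s)
          = ∑ r ∈ Finset.range (k + 1),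
            (k.choose r : ℝ) • (Psym A (k + 1 - r) s * Qsym A r s) := by
        rw [Finset.sum_range_succ, Nat.choose_succ_self]
        rw [Finset.sum_range_succ' (fun r => (k.choose r : ℝ) • (Psym A (k + 1 - r) s * Qsym A r s)) k]
        simp [Nat.succ_sub_succ]
      rw [add_assoc, h2, add_comm]
    rw [hsplit]
    have hP' : ∀ r ∈ Finset.range (k + 1),
        (k.choose r : ℝ) • (Psym A (k + 1 - r) s * Qsym A r s)
        = (k.choose r : ℝ) •
          ((mderiv (Psym A (k - r)) s + A s * Psym A (k - r) s) * Qsym A r s) := by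
      intro r hr
      have hkr : k + 1 - r = (k - r) + 1 := by
        have := Finset.mem_range.mp hr; omega
      rw [hkr]
      rfl
    rw [Finset.sum_congr rfl hP']
    have hQ' : ∀ r : ℕ, Qsym A (r + 1) s = mderiv (Qsym A r) s - Qsym A r s * A s :=
      fun r => rfl
    simp only [hQ']
    have expand : ∀ r ∈ Finset.range (k + 1),
        (k.choose r : ℝ) •
          ((mderiv (Psym A (k - r)) s + A s * Psym A (k - r) s) * Qsym A r s)
        + (k.choose r : ℝ) •
          (Psym A (k - r) s * (mderiv (Qsym A r) s - Qsym A r s * A s))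
        = (k.choose r : ℝ) •
            (mderiv (Psym A (k - r)) s * Qsym A r s + Psym A (k - r) s * mderiv (Qsym A r) s)
          + (A s * ((k.choose r : ℝ) • (Psym A (k - r) s * Qsym A r s))
            - ((k.choose r : ℝ) • (Psym A (k - r) s * Qsym A r s)) * A s) := by
      intro r _
      simp only [add_mul, mul_sub, smul_add, smul_sub, mul_smul_comm, smul_mul_assoc, mul_assoc]
      abel
    rw [← Finset.sum_add_distrib, Finset.sum_congr rfl expand, Finset.sum_add_distrib,
      Finset.sum_sub_distrib, hE, ← Finset.mul_sum, ← Finset.sum_mul, ih s]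
    simp
end aux

theorem stmt3 {n : ℕ} (A : ℝ → Matrix (Fin n) (Fin n) ℝ) (hA : MSmooth A) (k : ℕ) (s : ℝ) :
    (1 ≤ k →
      ∑ r ∈ Finset.range (k + 1), (k.choose r : ℝ) • (Psym A (k - r) s * Qsym A r s) = 0) ∧
    (k = 0 →
      ∑ r ∈ Finset.range (k + 1), (k.choose r : ℝ) • (Psym A (k - r) s * Qsym A r s) = 1) := by
  constructor
  · intro hk
    exact Ssum_zero A hA k hk s
  · intro hk
    subst hk
    simp [Psym, Qsym]
end

section
/- Let ∇ be the operator on smooth row-covector-valued functions ω : ℝ → (Fin n → ℝ) given by (∇ω)(s) = ω'(s) - ω(s) · A(s) (row vector times matrix). Then ∇^k ω = Σ_{a=0}^{k} C(k,a) · ω^{(k-a)} · (Q a), where Q a are the recursively defined matrices with Q 0 = 1, Q (a+1) = (Q a)' - (Q a) * A. -/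
open Matrix Finset

noncomputable def conabla {n : ℕ} (A : ℝ → Matrix (Fin n) (Fin n) ℝ)
    (ω : ℝ → Fin n → ℝ) : ℝ → Fin n → ℝ :=
  fun s => vderiv ω s - ω s ᵥ* A s

lemma contDiff_top_deriv {f : ℝ → ℝ} (hf : ContDiff ℝ (⊤ : ℕ∞) f) : ContDiff ℝ (⊤ : ℕ∞) (deriv f) :=
  (contDiff_infty_iff_deriv.mp hf).2

lemma vsmooth_vderiv {n : ℕ} {Y : ℝ → Fin n → ℝ} (hY : VSmooth Y) :
    VSmooth (vderiv Y) :=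
  fun i => contDiff_top_deriv (hY i)

lemma vsmooth_iter {n : ℕ} {Y : ℝ → Fin n → ℝ} (hY : VSmooth Y) (m : ℕ) :
    VSmooth (vderiv^[m] Y) := by
  induction m with
  | zero => exact hY
  | succ m ih => rw [Function.iterate_succ_apply']; exact vsmooth_vderiv ih

lemma msmooth_Qsym {n : ℕ} {A : ℝ → Matrix (Fin n) (Fin n) ℝ} (hA : MSmooth A) (a : ℕ) :
    MSmooth (Qsym A a) := by
  induction a with
  | zero => intro i j; simpa [Qsym] using contDiff_const (c := (1 : Matrix (Fin n) (Fin n) ℝ) i j)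
  | succ a ih =>
    intro i j
    have h1 : ContDiff ℝ (⊤ : ℕ∞) (fun s => mderiv (Qsym A a) s i j) :=
      contDiff_top_deriv (ih i j)
    have h2 : ContDiff ℝ (⊤ : ℕ∞) (fun s => (Qsym A a s * A s) i j) := by
      simp only [Matrix.mul_apply]
      exact ContDiff.sum fun l _ => (ih i l).mul (hA l j)
    simpa [Qsym] using h1.sub h2

lemma vsmooth_vecMul {n : ℕ} {Y : ℝ → Fin n → ℝ} (hY : VSmooth Y)
    {M : ℝ → Matrix (Fin n) (Fin n) ℝ} (hM : MSmooth M) :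
    VSmooth (fun t => Y t ᵥ* M t) := by
  intro j
  simp only [Matrix.vecMul, dotProduct]
  exact ContDiff.sum fun l _ => (hY l).mul (hM l j)

lemma vderiv_vecMul {n : ℕ} {Y : ℝ → Fin n → ℝ} (hY : VSmooth Y)
    {M : ℝ → Matrix (Fin n) (Fin n) ℝ} (hM : MSmooth M) (s : ℝ) :
    vderiv (fun t => Y t ᵥ* M t) s = vderiv Y s ᵥ* M s + Y s ᵥ* mderiv M s := by
  funext j
  have hdiff : ∀ l, DifferentiableAt ℝ (fun t => Y t l * M t l j) s := fun l =>
    (((hY l).differentiable (by simp)) s).mul (((hM l j).differentiable (by simp)) s)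
  simp only [vderiv, Matrix.vecMul, dotProduct, Pi.add_apply]
  rw [deriv_fun_sum (fun l _ => hdiff l)]
  have key : ∀ l ∈ Finset.univ, deriv (fun t => Y t l * M t l j) s
      = deriv (fun t => Y t l) s * M s l j + Y s l * deriv (fun t => M t l j) s := by
    intro l _
    rw [deriv_fun_mul (((hY l).differentiable (by simp)) s) (((hM l j).differentiable (by simp)) s)]
  rw [Finset.sum_congr rfl key, Finset.sum_add_distrib]
  rfl

lemma vderiv_sum_smul {n m : ℕ} (c : ℕ → ℝ) (g : ℕ → ℝ → Fin n → ℝ)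
    (hg : ∀ a, VSmooth (g a)) (s : ℝ) :
    vderiv (fun t => ∑ a ∈ Finset.range m, c a • g a t) s
      = ∑ a ∈ Finset.range m, c a • vderiv (g a) s := by
  funext j
  simp only [vderiv, Finset.sum_apply, Pi.smul_apply, smul_eq_mul]
  rw [deriv_fun_sum (fun a _ => ((((hg a) j).differentiable (by simp)) s).const_mul (c a))]
  exact Finset.sum_congr rfl fun a _ =>
    deriv_const_mul _ ((((hg a) j).differentiable (by simp)) s)

lemma sum_smul_vecMul {n m : ℕ} (c : ℕ → ℝ) (f : ℕ → Fin n → ℝ)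
    (M : Matrix (Fin n) (Fin n) ℝ) :
    (∑ a ∈ Finset.range m, c a • f a) ᵥ* M
      = ∑ a ∈ Finset.range m, c a • (f a ᵥ* M) := by
  funext j
  simp only [Matrix.vecMul, dotProduct, Finset.sum_apply, Pi.smul_apply,
    smul_eq_mul, Finset.sum_mul]
  rw [Finset.sum_comm]
  exact Finset.sum_congr rfl fun a _ => by simp [mul_assoc, Finset.mul_sum]

lemma pascal_sum {M : Type*} [AddCommMonoid M] [Module ℝ M] (k : ℕ) (T : ℕ → M) :
    ∑ a ∈ Finset.range (k + 2), ((k + 1).choose a : ℝ) • T a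
      = ∑ a ∈ Finset.range (k + 1), (k.choose a : ℝ) • T a
        + ∑ a ∈ Finset.range (k + 1), (k.choose a : ℝ) • T (a + 1) := by
  rw [Finset.sum_range_succ' (fun a => ((k + 1).choose a : ℝ) • T a) (k + 1)]
  rw [Finset.sum_range_succ' (fun a => ((k).choose a : ℝ) • T a) k]
  have h1 : ∀ a, (((k + 1).choose (a + 1) : ℕ) : ℝ) • T (a + 1)
      = ((k.choose a : ℕ) : ℝ) • T (a + 1) + ((k.choose (a + 1) : ℕ) : ℝ) • T (a + 1) := by
    intro a
    rw [Nat.choose_succ_succ, Nat.cast_add, add_smul]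
  simp only [h1, Finset.sum_add_distrib]
  have h2 : ∑ a ∈ Finset.range k, ((k.choose (a + 1) : ℕ) : ℝ) • T (a + 1)
      = ∑ a ∈ Finset.range (k + 1), ((k.choose (a + 1) : ℕ) : ℝ) • T (a + 1) := by
    rw [Finset.sum_range_succ, Nat.choose_succ_self]
    simp
  rw [h2]
  simp only [Nat.choose_zero_right, Nat.cast_one, one_smul]
  abel

theorem stmt6 {n : ℕ} (A : ℝ → Matrix (Fin n) (Fin n) ℝ) (hA : MSmooth A)
    (ω : ℝ → Fin n → ℝ) (hω : VSmooth ω) (k : ℕ) (s : ℝ) :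
    (conabla A)^[k] ω s =
      ∑ a ∈ Finset.range (k + 1),
        (k.choose a : ℝ) • (vderiv^[k - a] ω s ᵥ* Qsym A a s) := by
  induction k generalizing s with
  | zero => simp [Qsym, Matrix.vecMul_one]
  | succ k ih =>
    have hF : (conabla A)^[k] ω = fun t => ∑ a ∈ Finset.range (k + 1),
        (k.choose a : ℝ) • (vderiv^[k - a] ω t ᵥ* Qsym A a t) := funext ih
    rw [Function.iterate_succ_apply']
    show vderiv ((conabla A)^[k] ω) s - (conabla A)^[k] ω s ᵥ* A s = _
    rw [hF]
    have hg : ∀ a, VSmooth (fun t => vderiv^[k - a] ω t ᵥ* Qsym A a t) := fun a =>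
      vsmooth_vecMul (vsmooth_iter hω _) (msmooth_Qsym hA a)
    rw [vderiv_sum_smul (fun a => (k.choose a : ℝ)) _ hg s,
      sum_smul_vecMul (fun a => (k.choose a : ℝ))
        (fun a => vderiv^[k - a] ω s ᵥ* Qsym A a s) (A s)]
    have hterm : ∀ a ∈ Finset.range (k + 1),
        (k.choose a : ℝ) • vderiv (fun t => vderiv^[k - a] ω t ᵥ* Qsym A a t) s
          - (k.choose a : ℝ) • ((vderiv^[k - a] ω s ᵥ* Qsym A a s) ᵥ* A s)
        = (k.choose a : ℝ) • (vderiv^[k + 1 - a] ω s ᵥ* Qsym A a s)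
          + (k.choose a : ℝ) • (vderiv^[k + 1 - (a + 1)] ω s ᵥ* Qsym A (a + 1) s) := by
      intro a ha
      rw [vderiv_vecMul (vsmooth_iter hω _) (msmooth_Qsym hA a)]
      have e1 : vderiv (vderiv^[k - a] ω) s = vderiv^[k - a + 1] ω s := by
        rw [Function.iterate_succ_apply']
      have e2 : k - a + 1 = k + 1 - a := by
        have : a ≤ k := Nat.lt_succ_iff.mp (Finset.mem_range.mp ha)
        omega
      have e3 : k + 1 - (a + 1) = k - a := by omega
      rw [e1, e2, e3, Matrix.vecMul_vecMul, smul_add]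
      have e4 : (k.choose a : ℝ) • (vderiv^[k - a] ω s ᵥ* mderiv (Qsym A a) s)
            - (k.choose a : ℝ) • (vderiv^[k - a] ω s ᵥ* (Qsym A a s * A s))
          = (k.choose a : ℝ) • (vderiv^[k - a] ω s ᵥ* Qsym A (a + 1) s) := by
        rw [← smul_sub, ← Matrix.vecMul_sub]
        rfl
      rw [add_sub_assoc, e4]
    rw [← Finset.sum_sub_distrib, Finset.sum_congr rfl hterm, Finset.sum_add_distrib]
    rw [pascal_sum k (fun a => vderiv^[k + 1 - a] ω s ᵥ* Qsym A a s)]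
end
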